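/- arXiv:2512.17763 — 4 statements merged into one kernel-verified Lean document; each statement's English description precedes it below -/
import Mathlib

section
/- Let a > 0. Then for every function φ in H¹(0,∞), one has κ(a) ∫₀^{1/2} φ² dt ≤ ∫₀^∞ (φ')² dt + a² ∫_{1/2}^∞ φ² dt, where κ(a) is the smallest positive root of √κ · tan(√κ/2) = a. -/
/-!
Put `ω = √κ`; the minimality of `κ` forces `ω < π`. On `(0, 1/2]` the function
`w t = ω tan (ω t)` solves the Riccati equation `w' = κ + w²`, and on `[1/2, ∞)` the constant `a`
solves `w' = -a² + w²`. For any solution of `w' = k + w²`, expanding `(φ' + w φ)² ≥ 0` gives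
`φ'² - k φ² ≥ -(w φ²)'`. Integrating over `(ε, 1/2)`, where `w ε ≥ 0` and `w (1/2) = a`, and over
`(1/2, T)`, where `φ T → 0`, the boundary terms at `1/2` cancel when the two bounds are added.
-/

open MeasureTheory Real Set

/-- `κ` is the smallest positive root of `√κ · tan(√κ/2) = a`. -/
def IsSmallestRoot (a κ : ℝ) : Prop :=
  0 < κ ∧ Real.sqrt κ * Real.tan (Real.sqrt κ / 2) = a ∧
    ∀ κ' : ℝ, 0 < κ' → Real.sqrt κ' * Real.tan (Real.sqrt κ' / 2) = a → κ ≤ κ'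

open Filter Topology

theorem exists_mul_tan_half_eq {a : ℝ} (ha : 0 ≤ a) :
    ∃ x ∈ Ico 0 π, x * tan (x / 2) = a := by
  have hcont : ContinuousOn (fun x : ℝ => x * tan (x / 2)) (Ico 0 π) := by
    intro x hx
    have hcos : cos (x / 2) ≠ 0 :=
      (cos_pos_of_mem_Ioo ⟨by linarith [hx.1, pi_pos], by linarith [hx.2]⟩).ne'
    exact (continuousAt_id.mul ((continuousAt_tan.mpr hcos).comp (f := fun y : ℝ => y / 2)
      (continuousAt_id.div_const 2))).continuousWithinAt
  have hhalf : Tendsto (fun x : ℝ => x / 2) (𝓝[<] π) (𝓝[<] (π / 2)) :=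
    tendsto_nhdsWithin_of_tendsto_nhds_of_eventually_within _
      ((continuous_id.div_const 2).tendsto' π (π / 2) rfl |>.mono_left nhdsWithin_le_nhds)
      (eventually_nhdsWithin_of_forall fun x hx => by simp only [mem_Iio] at hx ⊢; linarith)
  have hlim : Tendsto (fun x : ℝ => x * tan (x / 2)) (𝓝[<] π) atTop :=
    Tendsto.pos_mul_atTop pi_pos (tendsto_nhdsWithin_of_tendsto_nhds tendsto_id)
      (tendsto_tan_pi_div_two.comp hhalf)
  have hl : 𝓝[<] π ≤ 𝓟 (Ico 0 π) :=
    le_principal_iff.mpr (Ico_mem_nhdsLT pi_pos)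
  exact isPreconnected_Ico.intermediate_value_Ici (left_mem_Ico.mpr pi_pos) hl hcont hlim
    (show a ∈ Ici (0 * tan (0 / 2)) by simpa using ha)

theorem sqrt_lt_pi_of_isSmallestRoot {a κ : ℝ} (ha : 0 < a) (hκ : IsSmallestRoot a κ) :
    √κ < π := by
  obtain ⟨hκpos, -, hmin⟩ := hκ
  obtain ⟨x, ⟨hx0, hxπ⟩, hxa⟩ := exists_mul_tan_half_eq ha.le
  have hxpos : 0 < x := hx0.lt_of_ne (by rintro rfl; simp at hxa; linarith)
  have hsqrt : √(x ^ 2) = x := sqrt_sq hxpos.le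
  calc √κ ≤ √(x ^ 2) := sqrt_le_sqrt (hmin _ (by positivity) (by rwa [hsqrt]))
    _ = x := hsqrt
    _ < π := hxπ

theorem hasDerivAt_mul_tan_mul {ω x : ℝ} (hx : cos (ω * x) ≠ 0) :
    HasDerivAt (fun t => ω * tan (ω * t)) (ω ^ 2 + (ω * tan (ω * x)) ^ 2) x := by
  have h := ((hasDerivAt_tan hx).comp x ((hasDerivAt_id x).const_mul ω)).const_mul ω
  refine h.congr_deriv ?_
  rw [← inv_one_add_tan_sq hx]
  field_simp

theorem sub_le_integral_sq_deriv_sub_of_riccati {φ w : ℝ → ℝ} {c d κ : ℝ} (hcd : c ≤ d)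
    (hw : ∀ x ∈ Icc c d, HasDerivAt w (κ + w x ^ 2) x)
    (hφ : ∀ x ∈ Icc c d, DifferentiableAt ℝ φ x)
    (hint : IntegrableOn (fun x => deriv φ x ^ 2 - κ * φ x ^ 2) (Icc c d)) :
    w c * φ c ^ 2 - w d * φ d ^ 2 ≤ ∫ x in c..d, (deriv φ x ^ 2 - κ * φ x ^ 2) := by
  have hderiv : ∀ x ∈ Icc c d, HasDerivAt (fun t => -(w t * φ t ^ 2))
      (-((κ + w x ^ 2) * φ x ^ 2 + w x * (2 * φ x * deriv φ x))) x := fun x hx => by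
    have hφ2 := (hφ x hx).hasDerivAt.fun_pow 2
    refine ((hw x hx).mul hφ2).neg.congr_deriv ?_
    push_cast
    ring
  have key := intervalIntegral.sub_le_integral_of_hasDeriv_right_of_le hcd
    (HasDerivAt.continuousOn hderiv)
    (fun x hx => (hderiv x (Ioo_subset_Icc_self hx)).hasDerivWithinAt) hint
    (fun x _ => by nlinarith [sq_nonneg (deriv φ x + w x * φ x)])
  linarith

theorem tendsto_sq_atTop_of_integrableOn_sq_deriv {φ : ℝ → ℝ} {c : ℝ}
    (hdiff : ∀ t ∈ Ioi c, DifferentiableAt ℝ φ t)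
    (hφ2 : IntegrableOn (fun t => φ t ^ 2) (Ioi c))
    (hφ'2 : IntegrableOn (fun t => deriv φ t ^ 2) (Ioi c)) :
    Tendsto (fun t => φ t ^ 2) atTop (𝓝 0) := by
  have hmeas : AEStronglyMeasurable (fun t => 2 * φ t * deriv φ t) (volume.restrict (Ioi c)) :=
    (((continuousOn_of_forall_continuousAt fun t ht => (hdiff t ht).continuousAt)
      |>.aestronglyMeasurable measurableSet_Ioi).const_mul 2).mul
      (measurable_deriv φ).aestronglyMeasurable
  refine tendsto_zero_of_hasDerivAt_of_integrableOn_Ioi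
    (fun t ht => by simpa using (hdiff t ht).hasDerivAt.fun_pow 2) ?_ hφ2
  refine (hφ2.add hφ'2).mono' hmeas (Eventually.of_forall fun t => ?_)
  rw [Real.norm_eq_abs, abs_le, Pi.add_apply]
  constructor <;> nlinarith [sq_nonneg (φ t + deriv φ t), sq_nonneg (φ t - deriv φ t)]

theorem neg_mul_sq_le_integral_Ioo_of_tan {φ : ℝ → ℝ} {ω b : ℝ} (hω : 0 ≤ ω) (hb : 0 < b)
    (hωb : ω * b < π / 2) (hdiff : ∀ t ∈ Ioc 0 b, DifferentiableAt ℝ φ t)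
    (hφ2 : IntegrableOn (fun t => φ t ^ 2) (Ioo 0 b))
    (hφ'2 : IntegrableOn (fun t => deriv φ t ^ 2) (Ioo 0 b)) :
    -(ω * tan (ω * b)) * φ b ^ 2 ≤
      (∫ t in Ioo 0 b, deriv φ t ^ 2) - ω ^ 2 * ∫ t in Ioo 0 b, φ t ^ 2 := by
  set g := fun t => deriv φ t ^ 2 - ω ^ 2 * φ t ^ 2
  have hg : IntegrableOn g (Icc 0 b) :=
    (integrableOn_Icc_iff_integrableOn_Ioo).mpr (hφ'2.sub (hφ2.const_mul _))
  have hε : ∀ ε ∈ Ioo 0 b, -(ω * tan (ω * b)) * φ b ^ 2 ≤ ∫ t in ε..b, g t := by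
    intro ε hε
    have hsub : Icc ε b ⊆ Ioc 0 b := fun x hx => ⟨hε.1.trans_le hx.1, hx.2⟩
    have hw : ∀ x ∈ Icc ε b, HasDerivAt (fun t => ω * tan (ω * t))
        (ω ^ 2 + (ω * tan (ω * x)) ^ 2) x := fun x hx => by
      have hx0 := (hsub hx).1
      refine hasDerivAt_mul_tan_mul (cos_pos_of_mem_Ioo ⟨?_, ?_⟩).ne' <;>
        nlinarith [mul_le_mul_of_nonneg_left hx.2 hω, pi_pos]
    have htan : 0 ≤ tan (ω * ε) := tan_nonneg_of_nonneg_of_le_pi_div_two (mul_nonneg hω hε.1.le)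
      (by nlinarith [mul_le_mul_of_nonneg_left hε.2.le hω])
    have hriccati := sub_le_integral_sq_deriv_sub_of_riccati hε.2.le hw
      (fun x hx => hdiff x (hsub hx)) (hg.mono_set (Icc_subset_Icc_left hε.1.le))
    nlinarith [mul_nonneg (mul_nonneg hω htan) (sq_nonneg (φ ε))]
  have hlim : Tendsto (fun ε => ∫ t in ε..b, g t) (𝓝[>] 0) (𝓝 (∫ t in (0)..b, g t)) := by
    have hcont := intervalIntegral.continuousOn_primitive_interval_left
      (by rwa [uIcc_of_le hb.le] : IntegrableOn g (uIcc 0 b))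
    rw [uIcc_of_le hb.le] at hcont
    exact (hcont 0 (left_mem_Icc.mpr hb.le)).tendsto.mono_left
      (nhdsWithin_le_of_mem (Icc_mem_nhdsGT hb))
  have hle := ge_of_tendsto hlim (eventually_of_mem (Ioo_mem_nhdsGT hb) hε)
  rwa [intervalIntegral.integral_of_le hb.le, integral_Ioc_eq_integral_Ioo,
    integral_sub hφ'2 (hφ2.const_mul _), integral_const_mul] at hle

theorem mul_sq_le_integral_Ioi {φ : ℝ → ℝ} {a c : ℝ}
    (hdiff : ∀ t ∈ Ici c, DifferentiableAt ℝ φ t)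
    (hφ2 : IntegrableOn (fun t => φ t ^ 2) (Ioi c))
    (hφ'2 : IntegrableOn (fun t => deriv φ t ^ 2) (Ioi c)) :
    a * φ c ^ 2 ≤ (∫ t in Ioi c, deriv φ t ^ 2) + a ^ 2 * ∫ t in Ioi c, φ t ^ 2 := by
  set g := fun t => deriv φ t ^ 2 - -a ^ 2 * φ t ^ 2
  have hg : IntegrableOn g (Ioi c) := hφ'2.sub (hφ2.const_mul _)
  have hT : ∀ T ∈ Ici c, a * φ c ^ 2 - a * φ T ^ 2 ≤ ∫ t in c..T, g t := fun T hT =>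
    sub_le_integral_sq_deriv_sub_of_riccati hT
      (fun x _ => (hasDerivAt_const x a).congr_deriv (by ring))
      (fun x hx => hdiff x hx.1)
      (((integrableOn_Ici_iff_integrableOn_Ioi).mpr hg).mono_set Icc_subset_Ici_self)
  have hφT : Tendsto (fun T => a * φ c ^ 2 - a * φ T ^ 2) atTop (𝓝 (a * φ c ^ 2 - a * 0)) :=
    ((tendsto_sq_atTop_of_integrableOn_sq_deriv (fun t ht => hdiff t (Ioi_subset_Ici_self ht))
      hφ2 hφ'2).const_mul a).const_sub _
  have hle := le_of_tendsto_of_tendsto hφT (intervalIntegral_tendsto_integral_Ioi c hg tendsto_id)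
    (eventually_ge_atTop c |>.mono hT)
  rw [integral_sub hφ'2 (hφ2.const_mul _), integral_const_mul] at hle
  linarith

/-- Poincaré–Friedrichs inequality on the half line. -/
theorem stmt0 (a κ : ℝ) (ha : 0 < a) (hκ : IsSmallestRoot a κ)
    (φ : ℝ → ℝ) (hdiff : ∀ t ∈ Ioi (0:ℝ), DifferentiableAt ℝ φ t)
    (hφ2 : IntegrableOn (fun t => φ t ^ 2) (Ioi 0))
    (hφ'2 : IntegrableOn (fun t => deriv φ t ^ 2) (Ioi 0)) :
    κ * ∫ t in Ioo (0:ℝ) (1/2), φ t ^ 2 ≤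
      (∫ t in Ioi (0:ℝ), deriv φ t ^ 2) + a ^ 2 * ∫ t in Ioi (1/2 : ℝ), φ t ^ 2 := by
  have hωπ := sqrt_lt_pi_of_isSmallestRoot ha hκ
  obtain ⟨hκpos, hroot, -⟩ := hκ
  have hIoi : Ioi (1/2 : ℝ) ⊆ Ioi 0 := Ioi_subset_Ioi (by norm_num)
  have hnear := neg_mul_sq_le_integral_Ioo_of_tan (sqrt_nonneg κ) (by norm_num)
    (by linarith : √κ * (1/2) < π / 2) (fun t ht => hdiff t ht.1)
    (hφ2.mono_set Ioo_subset_Ioi_self) (hφ'2.mono_set Ioo_subset_Ioi_self)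
  have hfar := mul_sq_le_integral_Ioi (a := a)
    (fun t ht => hdiff t (Ici_subset_Ioi.mpr one_half_pos ht)) (hφ2.mono_set hIoi)
    (hφ'2.mono_set hIoi)
  have hsplit : ∫ t in Ioi (0:ℝ), deriv φ t ^ 2 =
      (∫ t in Ioo (0:ℝ) (1/2), deriv φ t ^ 2) + ∫ t in Ioi (1/2 : ℝ), deriv φ t ^ 2 := by
    rw [← integral_Ioc_eq_integral_Ioo, ← setIntegral_union Ioc_disjoint_Ioi_same
      measurableSet_Ioi (hφ'2.mono_set Ioc_subset_Ioi_self) (hφ'2.mono_set hIoi),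
      Ioc_union_Ioi_eq_Ioi (by norm_num)]
  rw [show √κ * (1/2) = √κ / 2 by ring, hroot, sq_sqrt hκpos.le] at hnear
  linarith
end

section
/- Let a, L > 0 and define on the cuboid R = (-a/2, a/2) × (-b/2, b/2) × (-L, 0) the field E(x,y,z) = (0, cos(πx/a) sin(πz/L), 0). Then div E = 0 in R, E vanishes on the faces {x = ±a/2}, {z = -L}, {z = 0}, E × ν = 0 on all of ∂R, and ∫_R |curl E|² dx = (π²/a² + π²/L²) ∫_R |E|² dx. -/
open MeasureTheory Real Set

noncomputable section

/-- Partial derivative in the first coordinate of a function on `ℝ³ = ℝ × ℝ × ℝ`. -/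
def px (f : ℝ × ℝ × ℝ → ℝ) (x : ℝ × ℝ × ℝ) : ℝ := fderiv ℝ f x (1, 0, 0)

/-- Partial derivative in the second coordinate. -/
def py (f : ℝ × ℝ × ℝ → ℝ) (x : ℝ × ℝ × ℝ) : ℝ := fderiv ℝ f x (0, 1, 0)

/-- Partial derivative in the third coordinate. -/
def pz (f : ℝ × ℝ × ℝ → ℝ) (x : ℝ × ℝ × ℝ) : ℝ := fderiv ℝ f x (0, 0, 1)

/-- Divergence of the vector field with components `E1, E2, E3`. -/
def div3 (E1 E2 E3 : ℝ × ℝ × ℝ → ℝ) (x : ℝ × ℝ × ℝ) : ℝ :=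
  px E1 x + py E2 x + pz E3 x

/-- First component of the curl. -/
def curlFst (E1 E2 E3 : ℝ × ℝ × ℝ → ℝ) (x : ℝ × ℝ × ℝ) : ℝ := py E3 x - pz E2 x

/-- Second component of the curl. -/
def curlSnd (E1 E2 E3 : ℝ × ℝ × ℝ → ℝ) (x : ℝ × ℝ × ℝ) : ℝ := pz E1 x - px E3 x

/-- Third component of the curl. -/
def curlTrd (E1 E2 E3 : ℝ × ℝ × ℝ → ℝ) (x : ℝ × ℝ × ℝ) : ℝ := px E2 x - py E1 x

/-- Partial derivative in the first coordinate of a function on `ℝ²`. -/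
def pu (f : ℝ × ℝ → ℝ) (p : ℝ × ℝ) : ℝ := fderiv ℝ f p (1, 0)

/-- Partial derivative in the second coordinate of a function on `ℝ²`. -/
def pv (f : ℝ × ℝ → ℝ) (p : ℝ × ℝ) : ℝ := fderiv ℝ f p (0, 1)

/-- 2D Laplacian. -/
def lap2 (f : ℝ × ℝ → ℝ) (p : ℝ × ℝ) : ℝ := pu (pu f) p + pv (pv f) p

end

/-- Cross product on `ℝ³ = ℝ × ℝ × ℝ`. -/
noncomputable def cross3 (u v : ℝ × ℝ × ℝ) : ℝ × ℝ × ℝ :=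
  (u.2.1 * v.2.2 - u.2.2 * v.2.1, u.2.2 * v.1 - u.1 * v.2.2, u.1 * v.2.1 - u.2.1 * v.1)

/-! `E = (0, f(x) g(z), 0)` with `f = cos (π x / a)`, `g = sin (π z / L)`, so `div E = ∂_y E₂ = 0`
and `curl E = (-f g', 0, f' g)`. `E₂` vanishes where `f` or `g` does, i.e. on the faces
`x = ±a/2`, `z = -L`, `z = 0`, and on the faces `y = ±b/2` the normal is parallel to `E`.
Every integrand is a sum of products `φ(x) ψ(z)`, so the integrals over the box factor, and
`f², g²` and `(f'/(π/a))², (g'/(π/L))²` (sines and cosines squared) each integrate over their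
side, a half period, to half its length. -/

theorem hasFDerivAt_mul_fst_snd_snd {f g : ℝ → ℝ} {f' g' : ℝ} {x : ℝ × ℝ × ℝ}
    (hf : HasDerivAt f f' x.1) (hg : HasDerivAt g g' x.2.2) :
    HasFDerivAt (fun y : ℝ × ℝ × ℝ => f y.1 * g y.2.2)
      (f x.1 • g' • ((ContinuousLinearMap.snd ℝ ℝ ℝ).comp (ContinuousLinearMap.snd ℝ ℝ (ℝ × ℝ)))
        + g x.2.2 • f' • ContinuousLinearMap.fst ℝ ℝ (ℝ × ℝ)) x :=
  (hf.comp_hasFDerivAt x hasFDerivAt_fst).mul (hg.comp_hasFDerivAt x hasFDerivAt_snd.snd)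

section Separated

variable {f g : ℝ → ℝ} {f' g' : ℝ} {x : ℝ × ℝ × ℝ}

theorem px_mul_fst_snd_snd (hf : HasDerivAt f f' x.1) (hg : HasDerivAt g g' x.2.2) :
    px (fun y => f y.1 * g y.2.2) x = f' * g x.2.2 := by
  simp [px, (hasFDerivAt_mul_fst_snd_snd hf hg).fderiv, mul_comm]

theorem py_mul_fst_snd_snd (hf : HasDerivAt f f' x.1) (hg : HasDerivAt g g' x.2.2) :
    py (fun y => f y.1 * g y.2.2) x = 0 := by
  simp [py, (hasFDerivAt_mul_fst_snd_snd hf hg).fderiv]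

theorem pz_mul_fst_snd_snd (hf : HasDerivAt f f' x.1) (hg : HasDerivAt g g' x.2.2) :
    pz (fun y => f y.1 * g y.2.2) x = f x.1 * g' := by
  simp [pz, (hasFDerivAt_mul_fst_snd_snd hf hg).fderiv]

end Separated

section SndOnly

variable (F : ℝ × ℝ × ℝ → ℝ) (x : ℝ × ℝ × ℝ)

theorem div3_snd_only : div3 (fun _ => 0) F (fun _ => 0) x = py F x := by
  simp [div3, px, pz]

theorem curlFst_snd_only : curlFst (fun _ => 0) F (fun _ => 0) x = -pz F x := by
  simp [curlFst, py]

theorem curlSnd_snd_only : curlSnd (fun _ => 0) F (fun _ => 0) x = 0 := by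
  simp [curlSnd, px, pz]

theorem curlTrd_snd_only : curlTrd (fun _ => 0) F (fun _ => 0) x = px F x := by
  simp [curlTrd, py]

theorem cross3_snd_only (e : ℝ) (v : ℝ × ℝ × ℝ) :
    cross3 (0, e, 0) v = (e * v.2.2, 0, -(e * v.1)) := by
  simp [cross3]

end SndOnly

section HalfPeriod

variable {ℓ : ℝ}

theorem hasDerivAt_cos_pi_mul_div (ℓ u : ℝ) :
    HasDerivAt (fun u => cos (π * u / ℓ)) (-sin (π * u / ℓ) * (π / ℓ)) u := by
  simpa using (((hasDerivAt_id u).const_mul π).div_const ℓ).cos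

theorem hasDerivAt_sin_pi_mul_div (ℓ u : ℝ) :
    HasDerivAt (fun u => sin (π * u / ℓ)) (cos (π * u / ℓ) * (π / ℓ)) u := by
  simpa using (((hasDerivAt_id u).const_mul π).div_const ℓ).sin

theorem intervalIntegral_sin_sq_half_period (hℓ : ℓ ≠ 0) (p : ℝ) :
    ∫ x in p..p + ℓ, sin (π * x / ℓ) ^ 2 = ℓ / 2 := by
  have hc : π / ℓ ≠ 0 := div_ne_zero pi_ne_zero hℓ
  simp_rw [mul_div_right_comm π _ ℓ]
  rw [intervalIntegral.integral_comp_mul_left (fun t => sin t ^ 2) hc, integral_sin_sq,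
    show π / ℓ * (p + ℓ) = π / ℓ * p + π by rw [mul_add, div_mul_cancel₀ π hℓ],
    sin_add_pi, cos_add_pi, smul_eq_mul, neg_mul_neg, sub_self, zero_add, add_sub_cancel_left,
    inv_div]
  field_simp

theorem intervalIntegral_cos_sq_half_period (hℓ : ℓ ≠ 0) (p : ℝ) :
    ∫ x in p..p + ℓ, cos (π * x / ℓ) ^ 2 = ℓ / 2 := by
  have hc : π / ℓ ≠ 0 := div_ne_zero pi_ne_zero hℓ
  simp_rw [mul_div_right_comm π _ ℓ]
  rw [intervalIntegral.integral_comp_mul_left (fun t => cos t ^ 2) hc, integral_cos_sq,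
    show π / ℓ * (p + ℓ) = π / ℓ * p + π by rw [mul_add, div_mul_cancel₀ π hℓ],
    sin_add_pi, cos_add_pi, smul_eq_mul, neg_mul_neg, sub_self, zero_add, add_sub_cancel_left,
    inv_div]
  field_simp

theorem setIntegral_Ioo_sin_sq_half_period {p q : ℝ} (hℓ : 0 < ℓ) (hq : p + ℓ = q) :
    ∫ x in Ioo p q, sin (π * x / ℓ) ^ 2 = ℓ / 2 := by
  rw [← integral_Ioc_eq_integral_Ioo, ← intervalIntegral.integral_of_le (by linarith), ← hq]
  exact intervalIntegral_sin_sq_half_period hℓ.ne' p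

theorem setIntegral_Ioo_cos_sq_half_period {p q : ℝ} (hℓ : 0 < ℓ) (hq : p + ℓ = q) :
    ∫ x in Ioo p q, cos (π * x / ℓ) ^ 2 = ℓ / 2 := by
  rw [← integral_Ioc_eq_integral_Ioo, ← intervalIntegral.integral_of_le (by linarith), ← hq]
  exact intervalIntegral_cos_sq_half_period hℓ.ne' p

end HalfPeriod

theorem setIntegral_prod_prod_mul (f g : ℝ → ℝ) (s t u : Set ℝ) :
    ∫ x in s ×ˢ t ×ˢ u, f x.1 * g x.2.2 = (∫ x in s, f x) * (volume.real t * ∫ z in u, g z) := by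
  rw [Measure.volume_eq_prod, ← Measure.prod_restrict,
    integral_prod_mul (μ := volume.restrict s) f (fun y : ℝ × ℝ => g y.2),
    Measure.volume_eq_prod, ← Measure.prod_restrict]
  congr 1
  simpa using integral_prod_mul (μ := volume.restrict t) (ν := volume.restrict u) (fun _ => 1) g

theorem integrableOn_Ioo_prod_Ioo_prod_Ioo {F : ℝ × ℝ × ℝ → ℝ} (hF : Continuous F)
    (p q r s t u : ℝ) : IntegrableOn F (Ioo p q ×ˢ Ioo r s ×ˢ Ioo t u) :=
  (hF.integrableOn_Icc (a := (p, r, t)) (b := (q, s, u))).mono_set fun _ ⟨h₁, h₂, h₃⟩ =>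
    ⟨⟨h₁.1.le, h₂.1.le, h₃.1.le⟩, ⟨h₁.2.le, h₂.2.le, h₃.2.le⟩⟩

noncomputable def te101 (a L : ℝ) (x : ℝ × ℝ × ℝ) : ℝ := cos (π * x.1 / a) * sin (π * x.2.2 / L)

section TE101

variable {a L : ℝ}

theorem te101_eq_zero (ha : a ≠ 0) (hL : L ≠ 0) {x : ℝ × ℝ × ℝ}
    (hx : x.1 = a/2 ∨ x.1 = -(a/2) ∨ x.2.2 = -L ∨ x.2.2 = 0) : te101 a L x = 0 := by
  rcases hx with h | h | h | h <;> rw [te101, h]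
  · rw [show π * (a/2) / a = π/2 by field_simp, cos_pi_div_two, zero_mul]
  · rw [show π * -(a/2) / a = -(π/2) by field_simp, cos_neg, cos_pi_div_two, zero_mul]
  · rw [show π * -L / L = -π by field_simp, sin_neg, sin_pi, neg_zero, mul_zero]
  · rw [mul_zero, zero_div, sin_zero, mul_zero]

theorem px_te101 (x : ℝ × ℝ × ℝ) :
    px (te101 a L) x = -sin (π * x.1 / a) * (π / a) * sin (π * x.2.2 / L) :=
  px_mul_fst_snd_snd (hasDerivAt_cos_pi_mul_div a x.1) (hasDerivAt_sin_pi_mul_div L x.2.2)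

theorem py_te101 (x : ℝ × ℝ × ℝ) : py (te101 a L) x = 0 :=
  py_mul_fst_snd_snd (hasDerivAt_cos_pi_mul_div a x.1) (hasDerivAt_sin_pi_mul_div L x.2.2)

theorem pz_te101 (x : ℝ × ℝ × ℝ) :
    pz (te101 a L) x = cos (π * x.1 / a) * (cos (π * x.2.2 / L) * (π / L)) :=
  pz_mul_fst_snd_snd (hasDerivAt_cos_pi_mul_div a x.1) (hasDerivAt_sin_pi_mul_div L x.2.2)

theorem curl_sq_te101 (x : ℝ × ℝ × ℝ) :
    curlFst (fun _ => 0) (te101 a L) (fun _ => 0) x ^ 2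
        + curlSnd (fun _ => 0) (te101 a L) (fun _ => 0) x ^ 2
        + curlTrd (fun _ => 0) (te101 a L) (fun _ => 0) x ^ 2
      = (π / L) ^ 2 * (cos (π * x.1 / a) ^ 2 * cos (π * x.2.2 / L) ^ 2)
        + (π / a) ^ 2 * (sin (π * x.1 / a) ^ 2 * sin (π * x.2.2 / L) ^ 2) := by
  rw [curlFst_snd_only, curlSnd_snd_only, curlTrd_snd_only, px_te101, pz_te101]
  ring

theorem setIntegral_sq_te101 (ha : 0 < a) (hL : 0 < L) (t : Set ℝ) :
    ∫ x in Ioo (-(a/2)) (a/2) ×ˢ t ×ˢ Ioo (-L) 0, te101 a L x ^ 2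
      = a / 2 * (volume.real t * (L / 2)) := by
  simp only [te101, mul_pow]
  rw [setIntegral_prod_prod_mul (fun u => cos (π * u / a) ^ 2) (fun w => sin (π * w / L) ^ 2),
    setIntegral_Ioo_cos_sq_half_period ha (by ring), setIntegral_Ioo_sin_sq_half_period hL (by ring)]

theorem setIntegral_curl_sq_te101 (ha : 0 < a) (hL : 0 < L) (c d : ℝ) :
    ∫ x in Ioo (-(a/2)) (a/2) ×ˢ Ioo c d ×ˢ Ioo (-L) 0,
        (curlFst (fun _ => 0) (te101 a L) (fun _ => 0) x ^ 2
          + curlSnd (fun _ => 0) (te101 a L) (fun _ => 0) x ^ 2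
          + curlTrd (fun _ => 0) (te101 a L) (fun _ => 0) x ^ 2)
      = (π ^ 2 / a ^ 2 + π ^ 2 / L ^ 2) * (a / 2 * (volume.real (Ioo c d) * (L / 2))) := by
  simp only [curl_sq_te101]
  rw [integral_add (integrableOn_Ioo_prod_Ioo_prod_Ioo (by fun_prop) ..)
      (integrableOn_Ioo_prod_Ioo_prod_Ioo (by fun_prop) ..),
    integral_const_mul, integral_const_mul,
    setIntegral_prod_prod_mul (fun u => cos (π * u / a) ^ 2) (fun w => cos (π * w / L) ^ 2),
    setIntegral_prod_prod_mul (fun u => sin (π * u / a) ^ 2) (fun w => sin (π * w / L) ^ 2),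
    setIntegral_Ioo_cos_sq_half_period ha (by ring), setIntegral_Ioo_cos_sq_half_period hL (by ring),
    setIntegral_Ioo_sin_sq_half_period ha (by ring), setIntegral_Ioo_sin_sq_half_period hL (by ring)]
  field_simp
  ring

end TE101

theorem stmt8_general (a b L : ℝ) (ha : 0 < a) (hL : 0 < L) :
    let R : Set (ℝ × ℝ × ℝ) := (Ioo (-(a/2)) (a/2)) ×ˢ (Ioo (-(b/2)) (b/2)) ×ˢ (Ioo (-L) 0)
    let E1 : ℝ × ℝ × ℝ → ℝ := fun _ => 0
    let E2 : ℝ × ℝ × ℝ → ℝ := fun x => Real.cos (π * x.1 / a) * Real.sin (π * x.2.2 / L)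
    let E3 : ℝ × ℝ × ℝ → ℝ := fun _ => 0
    (∀ x ∈ R, div3 E1 E2 E3 x = 0) ∧
    (∀ x ∈ closure R, (x.1 = a/2 ∨ x.1 = -(a/2) ∨ x.2.2 = -L ∨ x.2.2 = 0) →
        E1 x = 0 ∧ E2 x = 0 ∧ E3 x = 0) ∧
    (∀ x ∈ closure R,
        (x.1 = a/2 → cross3 (E1 x, E2 x, E3 x) (1, 0, 0) = 0) ∧
        (x.1 = -(a/2) → cross3 (E1 x, E2 x, E3 x) (-1, 0, 0) = 0) ∧
        (x.2.1 = b/2 → cross3 (E1 x, E2 x, E3 x) (0, 1, 0) = 0) ∧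
        (x.2.1 = -(b/2) → cross3 (E1 x, E2 x, E3 x) (0, -1, 0) = 0) ∧
        (x.2.2 = 0 → cross3 (E1 x, E2 x, E3 x) (0, 0, 1) = 0) ∧
        (x.2.2 = -L → cross3 (E1 x, E2 x, E3 x) (0, 0, -1) = 0)) ∧
    (∫ x in R, ((curlFst E1 E2 E3 x) ^ 2 + (curlSnd E1 E2 E3 x) ^ 2
          + (curlTrd E1 E2 E3 x) ^ 2))
      = (π ^ 2 / a ^ 2 + π ^ 2 / L ^ 2) * ∫ x in R, (E1 x ^ 2 + E2 x ^ 2 + E3 x ^ 2) := by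
  intro R E1 E2 E3
  have hE2 : E2 = te101 a L := rfl
  have hface : ∀ {x}, _ → te101 a L x = 0 := te101_eq_zero ha.ne' hL.ne'
  refine ⟨fun x _ => ?_, fun x _ hx => ⟨rfl, hface hx, rfl⟩, fun x _ => ?_, ?_⟩
  · rw [hE2, div3_snd_only, py_te101]
  · simp only [E1, E3, hE2, cross3_snd_only]
    refine ⟨fun h => ?_, fun h => ?_, fun _ => by simp, fun _ => by simp, fun h => ?_, fun h => ?_⟩ <;>
      simp [hface (x := x) (by tauto)]
  · simp only [R, hE2, E1, E3, setIntegral_curl_sq_te101 ha hL, zero_pow two_ne_zero, zero_add,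
      add_zero, setIntegral_sq_te101 ha hL]

/-- On the cuboid `R = (-a/2,a/2) × (-b/2,b/2) × (-L,0)`, the field
`E = (0, cos(πx/a) sin(πz/L), 0)` is divergence free, vanishes on the faces
`x = ±a/2`, `z = -L`, `z = 0`, satisfies `E × ν = 0` on all of `∂R`, and its Rayleigh
quotient is `π²/a² + π²/L²`. -/
theorem stmt8 (a b L : ℝ) (ha : 0 < a) (hb : 0 < b) (hL : 0 < L) :
    let R : Set (ℝ × ℝ × ℝ) := (Ioo (-(a/2)) (a/2)) ×ˢ (Ioo (-(b/2)) (b/2)) ×ˢ (Ioo (-L) 0)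
    let E1 : ℝ × ℝ × ℝ → ℝ := fun _ => 0
    let E2 : ℝ × ℝ × ℝ → ℝ := fun x => Real.cos (π * x.1 / a) * Real.sin (π * x.2.2 / L)
    let E3 : ℝ × ℝ × ℝ → ℝ := fun _ => 0
    (∀ x ∈ R, div3 E1 E2 E3 x = 0) ∧
    (∀ x ∈ closure R, (x.1 = a/2 ∨ x.1 = -(a/2) ∨ x.2.2 = -L ∨ x.2.2 = 0) →
        E1 x = 0 ∧ E2 x = 0 ∧ E3 x = 0) ∧
    (∀ x ∈ closure R,
        (x.1 = a/2 → cross3 (E1 x, E2 x, E3 x) (1, 0, 0) = 0) ∧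
        (x.1 = -(a/2) → cross3 (E1 x, E2 x, E3 x) (-1, 0, 0) = 0) ∧
        (x.2.1 = b/2 → cross3 (E1 x, E2 x, E3 x) (0, 1, 0) = 0) ∧
        (x.2.1 = -(b/2) → cross3 (E1 x, E2 x, E3 x) (0, -1, 0) = 0) ∧
        (x.2.2 = 0 → cross3 (E1 x, E2 x, E3 x) (0, 0, 1) = 0) ∧
        (x.2.2 = -L → cross3 (E1 x, E2 x, E3 x) (0, 0, -1) = 0)) ∧
    (∫ x in R, ((curlFst E1 E2 E3 x) ^ 2 + (curlSnd E1 E2 E3 x) ^ 2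
          + (curlTrd E1 E2 E3 x) ^ 2))
      = (π ^ 2 / a ^ 2 + π ^ 2 / L ^ 2) * ∫ x in R, (E1 x ^ 2 + E2 x ^ 2 + E3 x ^ 2) :=
  stmt8_general a b L ha hL
end

section
/- Let ψ ∈ H¹((0,1)³) vanish on the faces {x=0}, {y=0}, {z=0} of the unit cube C = (0,1)³. Then the sum of squared L² traces on the three opposite faces satisfies ∫_{z=1} ψ² + ∫_{y=1} ψ² + ∫_{x=1} ψ² ≤ (4/π) ∫_C |∇ψ|² dx. -/
/-!
Each face trace is controlled by the derivative normal to that face. Along a segment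
perpendicular to the face, `ψ` vanishes at the end lying on the opposite (Dirichlet) face, so
the fundamental theorem of calculus and Cauchy–Schwarz give `ψ(end)² ≤ ∫ (∂ₙψ)²` along the
segment. Integrating over the face (Fubini, after permuting the coordinates) gives
`∫_face ψ² ≤ ∫_C (∂ₙψ)²`; summing over the three faces yields the inequality with the
constant `1 ≤ 4/π`.
-/

open MeasureTheory Real Set

theorem sq_sub_le_mul_integral_sq_of_hasDerivAt {g g' : ℝ → ℝ} {a b : ℝ} (hab : a ≤ b)
    (hg : ∀ t ∈ Icc a b, HasDerivAt g (g' t) t) (hg' : ContinuousOn g' (Icc a b)) :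
    (g b - g a) ^ 2 ≤ (b - a) * ∫ t in a..b, g' t ^ 2 := by
  rcases hab.eq_or_lt with rfl | hlt
  · simp
  have hftc : ∫ t in a..b, g' t = g b - g a :=
    intervalIntegral.integral_eq_sub_of_hasDerivAt (fun t ht => hg t (uIcc_of_le hab ▸ ht))
      (hg'.intervalIntegrable_of_Icc hab)
  set m := (g b - g a) / (b - a)
  -- Cauchy–Schwarz in the form `2 m g' - m ^ 2 ≤ g' ^ 2`, integrated, with `m` the mean slope.
  have hmono : ∫ t in a..b, (2 * m * g' t - m ^ 2) ≤ ∫ t in a..b, g' t ^ 2 :=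
    intervalIntegral.integral_mono_on hab
      (((hg'.intervalIntegrable_of_Icc hab).const_mul _).sub intervalIntegrable_const)
      ((hg'.pow 2).intervalIntegrable_of_Icc hab)
      fun t _ => by nlinarith [sq_nonneg (g' t - m)]
  rw [intervalIntegral.integral_sub ((hg'.intervalIntegrable_of_Icc hab).const_mul _)
    intervalIntegrable_const, intervalIntegral.integral_const_mul, hftc,
    intervalIntegral.integral_const, smul_eq_mul] at hmono
  have hm : m * (b - a) = g b - g a := div_mul_cancel₀ _ (sub_pos.2 hlt).ne'
  nlinarith [sub_pos.2 hlt]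

theorem setIntegral_sq_le_setIntegral_prod_Ioo_sq_deriv {α : Type*} [MeasureSpace α]
    [SFinite (volume : Measure α)] {s : Set α} (hs : MeasurableSet s) {u u' : α → ℝ → ℝ}
    (hu : ∀ p ∈ s, ∀ t ∈ Icc (0:ℝ) 1, HasDerivAt (u p) (u' p t) t)
    (hu' : ∀ p ∈ s, ContinuousOn (u' p) (Icc 0 1)) (h0 : ∀ p ∈ s, u p 0 = 0)
    (hint : IntegrableOn (fun q : α × ℝ => u' q.1 q.2 ^ 2) (s ×ˢ Ioo 0 1)) :
    ∫ p in s, u p 1 ^ 2 ≤ ∫ q in s ×ˢ Ioo 0 1, u' q.1 q.2 ^ 2 := by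
  rw [Measure.volume_eq_prod, setIntegral_prod _ hint]
  refine integral_mono_of_nonneg (ae_of_all _ fun p => sq_nonneg _) ?_
    (ae_restrict_of_forall_mem hs fun p hp => ?_)
  · rw [IntegrableOn, Measure.volume_eq_prod, ← Measure.prod_restrict] at hint
    exact hint.integral_prod_left
  · have h := sq_sub_le_mul_integral_sq_of_hasDerivAt zero_le_one (hu p hp) (hu' p hp)
    rwa [h0 p hp, sub_zero, sub_zero, one_mul, intervalIntegral.integral_of_le zero_le_one,
      integral_Ioc_eq_integral_Ioo] at h

theorem setIntegral_sq_le_setIntegral_fderiv_sq {α E : Type*} [MeasureSpace α]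
    [SFinite (volume : Measure α)] [NormedAddCommGroup E] [NormedSpace ℝ E] [MeasureSpace E]
    {e : α × ℝ → E} (he : MeasurePreserving e) (he' : MeasurableEmbedding e) {s : Set α}
    (hs : MeasurableSet s) {C : Set E} (hC : e ⁻¹' C = s ×ˢ Ioo 0 1) {ψ : E → ℝ}
    (hψ : ContDiff ℝ 1 ψ) {v : E} (hev : ∀ p t, HasDerivAt (fun t => e (p, t)) v t)
    (h0 : ∀ p ∈ s, ψ (e (p, 0)) = 0) (hint : IntegrableOn (fun x => fderiv ℝ ψ x v ^ 2) C) :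
    ∫ p in s, ψ (e (p, 1)) ^ 2 ≤ ∫ x in C, fderiv ℝ ψ x v ^ 2 := by
  have hψ' : Continuous fun x => fderiv ℝ ψ x v :=
    (hψ.continuous_fderiv one_ne_zero).clm_apply continuous_const
  rw [← he.setIntegral_preimage_emb he' _ C, hC]
  refine setIntegral_sq_le_setIntegral_prod_Ioo_sq_deriv hs
    (fun p _ t _ => (hψ.differentiable one_ne_zero _).hasFDerivAt.comp_hasDerivAt t (hev p t))
    (fun p _ => (hψ'.comp (continuous_iff_continuousAt.2 fun t => (hev p t).continuousAt))
      |>.continuousOn) h0 ?_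
  rw [← hC]
  exact (he.integrableOn_comp_preimage he').2 hint

/-- For `ψ ∈ H¹((0,1)³)` vanishing on the faces `{x=0}`, `{y=0}`, `{z=0}`, the sum of the
squared `L²` traces on the three opposite faces is bounded by `(4/π) ∫ |∇ψ|²`. -/
theorem stmt14 (ψ : ℝ × ℝ × ℝ → ℝ) (hψ : ContDiff ℝ 1 ψ) :
    let C : Set (ℝ × ℝ × ℝ) := (Ioo (0:ℝ) 1) ×ˢ (Ioo (0:ℝ) 1) ×ˢ (Ioo (0:ℝ) 1)
    let Sq : Set (ℝ × ℝ) := (Ioo (0:ℝ) 1) ×ˢ (Ioo (0:ℝ) 1)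
    MeasureTheory.IntegrableOn (fun x => ψ x ^ 2) C →
    MeasureTheory.IntegrableOn (fun x => (px ψ x) ^ 2 + (py ψ x) ^ 2 + (pz ψ x) ^ 2) C →
    (∀ x ∈ closure C, (x.1 = 0 ∨ x.2.1 = 0 ∨ x.2.2 = 0) → ψ x = 0) →
    (∫ p in Sq, ψ (p.1, p.2, 1) ^ 2) + (∫ p in Sq, ψ (p.1, 1, p.2) ^ 2)
        + (∫ p in Sq, ψ (1, p.1, p.2) ^ 2)
      ≤ (4 / π) * ∫ x in C, ((px ψ x) ^ 2 + (py ψ x) ^ 2 + (pz ψ x) ^ 2) := by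
  intro C Sq _ _ hbc
  have hclos : closure C = Icc 0 1 ×ˢ Icc 0 1 ×ˢ Icc 0 1 := by
    simp only [C, closure_prod_eq, closure_Ioo zero_ne_one]
  have hint (v : ℝ × ℝ × ℝ) : IntegrableOn (fun x => fderiv ℝ ψ x v ^ 2) C := by
    have hcont : Continuous fun x => fderiv ℝ ψ x v ^ 2 :=
      ((hψ.continuous_fderiv one_ne_zero).clm_apply continuous_const).pow 2
    exact (hcont.continuousOn.integrableOn_compact
      (hclos ▸ isCompact_Icc.prod (isCompact_Icc.prod isCompact_Icc))).mono_set subset_closure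
  have hmem0 : (0:ℝ) ∈ Icc 0 1 := left_mem_Icc.2 zero_le_one
  have hSq : MeasurableSet Sq := measurableSet_Ioo.prod measurableSet_Ioo
  have hz : ∫ p in Sq, ψ (p.1, p.2, 1) ^ 2 ≤ ∫ x in C, pz ψ x ^ 2 :=
    setIntegral_sq_le_setIntegral_fderiv_sq (e := fun q => (q.1.1, q.1.2, q.2))
      volume_preserving_prodAssoc MeasurableEquiv.prodAssoc.measurableEmbedding hSq
      (by ext; simp [C, Sq, and_assoc]) hψ
      (fun p t => (hasDerivAt_const t p.1).prodMk
        ((hasDerivAt_const t p.2).prodMk (hasDerivAt_id t)))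
      (fun p hp => hbc _
        (hclos ▸ ⟨Ioo_subset_Icc_self hp.1, Ioo_subset_Icc_self hp.2, hmem0⟩) (by simp))
      (hint _)
  have hy : ∫ p in Sq, ψ (p.1, 1, p.2) ^ 2 ≤ ∫ x in C, py ψ x ^ 2 :=
    setIntegral_sq_le_setIntegral_fderiv_sq (e := fun q => (q.1.1, q.2, q.1.2))
      (((MeasurePreserving.id volume).prod Measure.measurePreserving_swap).comp
        volume_preserving_prodAssoc)
      (MeasurableEquiv.prodAssoc.trans
        (MeasurableEquiv.prodCongr (.refl ℝ) .prodComm)).measurableEmbedding hSq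
      (by ext; simp [C, Sq]; tauto) hψ
      (fun p t => (hasDerivAt_const t p.1).prodMk
        ((hasDerivAt_id t).prodMk (hasDerivAt_const t p.2)))
      (fun p hp => hbc _
        (hclos ▸ ⟨Ioo_subset_Icc_self hp.1, hmem0, Ioo_subset_Icc_self hp.2⟩) (by simp))
      (hint _)
  have hx : ∫ p in Sq, ψ (1, p.1, p.2) ^ 2 ≤ ∫ x in C, px ψ x ^ 2 :=
    setIntegral_sq_le_setIntegral_fderiv_sq (e := fun q => (q.2, q.1.1, q.1.2))
      Measure.measurePreserving_swap MeasurableEquiv.prodComm.measurableEmbedding hSq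
      (by ext; simp [C, Sq]; tauto) hψ
      (fun p t => (hasDerivAt_id t).prodMk
        ((hasDerivAt_const t p.1).prodMk (hasDerivAt_const t p.2)))
      (fun p hp => hbc _
        (hclos ▸ ⟨hmem0, Ioo_subset_Icc_self hp.1, Ioo_subset_Icc_self hp.2⟩) (by simp))
      (hint _)
  calc _ ≤ (∫ x in C, px ψ x ^ 2) + (∫ x in C, py ψ x ^ 2) + ∫ x in C, pz ψ x ^ 2 := by
        linarith
    _ = ∫ x in C, (px ψ x ^ 2 + py ψ x ^ 2 + pz ψ x ^ 2) := by
        unfold px py pz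
        rw [integral_add _ (hint _), integral_add (hint _) (hint _)]
        exact (hint _).add (hint _)
    _ ≤ 4 / π * ∫ x in C, (px ψ x ^ 2 + py ψ x ^ 2 + pz ψ x ^ 2) :=
        le_mul_of_one_le_left (setIntegral_nonneg (by measurability) fun x _ => by positivity)
          ((one_le_div pi_pos).2 pi_le_four)
end

section
/- Let S ⊂ ℝ² be a bounded Lipschitz domain, λ_N > 0 and φ_N ∈ H¹(S) a Neumann eigenfunction with -Δφ_N = λ_N φ_N, ∂_n φ_N = 0 on ∂S, ‖φ_N‖_{L²(S)} = 1. For α > 0, define on Ω = S × ℝ the field E_α(x,y,z) = (∂_y φ_N(x,y), -∂_x φ_N(x,y), 0) e^{-α|z|}. Then ∫_Ω |curl E_α|² dx − λ_N ∫_Ω |E_α|² dx = α λ_N. -/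
open MeasureTheory Real Set

noncomputable section Aux

def proj12 : ℝ × ℝ × ℝ →L[ℝ] ℝ × ℝ :=
  (ContinuousLinearMap.fst ℝ ℝ (ℝ × ℝ)).prod
    ((ContinuousLinearMap.fst ℝ ℝ ℝ).comp (ContinuousLinearMap.snd ℝ ℝ (ℝ × ℝ)))

def proj3 : ℝ × ℝ × ℝ →L[ℝ] ℝ :=
  (ContinuousLinearMap.snd ℝ ℝ ℝ).comp (ContinuousLinearMap.snd ℝ ℝ (ℝ × ℝ))

lemma hasFDerivAt_form (α : ℝ) (h : ℝ × ℝ → ℝ) (x : ℝ × ℝ × ℝ)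
    (hh : DifferentiableAt ℝ h (x.1, x.2.1)) (hz : x.2.2 ≠ 0) :
    HasFDerivAt (fun y : ℝ × ℝ × ℝ => h (y.1, y.2.1) * Real.exp (-α * |y.2.2|))
      (h (x.1, x.2.1) • ((Real.exp (-α * |x.2.2|) * (-α * (SignType.sign x.2.2 : ℝ))) • proj3)
        + Real.exp (-α * |x.2.2|) • ((fderiv ℝ h (x.1, x.2.1)).comp proj12)) x := by
  have hA : HasFDerivAt (fun y : ℝ × ℝ × ℝ => h (y.1, y.2.1))
      ((fderiv ℝ h (x.1, x.2.1)).comp proj12) x :=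
    hh.hasFDerivAt.comp x proj12.hasFDerivAt
  have hG : HasDerivAt (fun z : ℝ => Real.exp (-α * |z|))
      (Real.exp (-α * |x.2.2|) * (-α * (SignType.sign x.2.2 : ℝ))) x.2.2 := by
    have := ((hasDerivAt_abs hz).const_mul (-α)).exp
    simpa [mul_comm, mul_assoc] using this
  have hB : HasFDerivAt (fun y : ℝ × ℝ × ℝ => Real.exp (-α * |y.2.2|))
      ((Real.exp (-α * |x.2.2|) * (-α * (SignType.sign x.2.2 : ℝ))) • proj3) x :=
    hG.comp_hasFDerivAt (h₂ := fun z : ℝ => Real.exp (-α * |z|)) x proj3.hasFDerivAt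
  exact hA.mul hB

lemma px_form (α : ℝ) (h : ℝ × ℝ → ℝ) (hh : Differentiable ℝ h) (x : ℝ × ℝ × ℝ)
    (hz : x.2.2 ≠ 0) :
    px (fun y : ℝ × ℝ × ℝ => h (y.1, y.2.1) * Real.exp (-α * |y.2.2|)) x
      = fderiv ℝ h (x.1, x.2.1) (1, 0) * Real.exp (-α * |x.2.2|) := by
  have H := (hasFDerivAt_form α h x (hh _) hz).fderiv
  unfold px
  rw [H]
  simp [proj12, proj3]
  ring

lemma py_form (α : ℝ) (h : ℝ × ℝ → ℝ) (hh : Differentiable ℝ h) (x : ℝ × ℝ × ℝ)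
    (hz : x.2.2 ≠ 0) :
    py (fun y : ℝ × ℝ × ℝ => h (y.1, y.2.1) * Real.exp (-α * |y.2.2|)) x
      = fderiv ℝ h (x.1, x.2.1) (0, 1) * Real.exp (-α * |x.2.2|) := by
  have H := (hasFDerivAt_form α h x (hh _) hz).fderiv
  unfold py
  rw [H]
  simp [proj12, proj3]
  ring

lemma pz_form (α : ℝ) (h : ℝ × ℝ → ℝ) (hh : Differentiable ℝ h) (x : ℝ × ℝ × ℝ)
    (hz : x.2.2 ≠ 0) :
    pz (fun y : ℝ × ℝ × ℝ => h (y.1, y.2.1) * Real.exp (-α * |y.2.2|)) x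
      = h (x.1, x.2.1) * (Real.exp (-α * |x.2.2|) * (-α * (SignType.sign x.2.2 : ℝ))) := by
  have H := (hasFDerivAt_form α h x (hh _) hz).fderiv
  unfold pz
  rw [H]
  have h0 : ((1 : ℝ), (0 : ℝ)) = ((0 : ℝ), (0 : ℝ)) → False := by simp
  simp [proj12, proj3, Prod.mk_zero_zero]

lemma ae_ne_zero : ∀ᵐ x : ℝ × ℝ × ℝ, x.2.2 ≠ 0 := by
  have h0 : volume {x : ℝ × ℝ × ℝ | x.2.2 = 0} = 0 := by
    have he : {x : ℝ × ℝ × ℝ | x.2.2 = 0}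
        = (univ : Set ℝ) ×ˢ ((univ : Set ℝ) ×ˢ ({0} : Set ℝ)) := by
      ext x
      simp only [mem_setOf_eq, mem_prod, mem_univ, mem_singleton_iff, true_and]
    rw [he, show (volume : Measure (ℝ × ℝ × ℝ))
        = ((volume : Measure ℝ).prod ((volume : Measure ℝ).prod (volume : Measure ℝ))) from rfl,
      Measure.prod_prod, Measure.prod_prod]
    simp
  rw [ae_iff]
  simpa using h0

lemma int_prod (S : Set (ℝ × ℝ)) (hS : MeasurableSet S) (u : ℝ × ℝ → ℝ) (w : ℝ → ℝ) :
    ∫ x in {x : ℝ × ℝ × ℝ | (x.1, x.2.1) ∈ S}, u (x.1, x.2.1) * w x.2.2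
      = (∫ p in S, u p) * ∫ z, w z := by
  have hΩ : MeasurableSet {x : ℝ × ℝ × ℝ | (x.1, x.2.1) ∈ S} :=
    (measurable_fst.prodMk (measurable_fst.comp measurable_snd)) hS
  rw [← integral_indicator hΩ]
  have hind : ∀ x : ℝ × ℝ × ℝ,
      ({x : ℝ × ℝ × ℝ | (x.1, x.2.1) ∈ S}).indicator
        (fun x : ℝ × ℝ × ℝ => u (x.1, x.2.1) * w x.2.2) x
      = S.indicator u (x.1, x.2.1) * w x.2.2 := by
    intro x
    by_cases hx : (x.1, x.2.1) ∈ S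
    · rw [indicator_of_mem (by exact hx), indicator_of_mem hx]
    · rw [indicator_of_notMem (by exact hx), indicator_of_notMem hx, zero_mul]
  simp_rw [hind]
  rw [← MeasurePreserving.integral_comp (volume_preserving_prodAssoc)
    (MeasurableEquiv.prodAssoc).measurableEmbedding
    (fun x : ℝ × ℝ × ℝ => S.indicator u (x.1, x.2.1) * w x.2.2)]
  have : ∀ q : (ℝ × ℝ) × ℝ,
      S.indicator u ((MeasurableEquiv.prodAssoc q : ℝ × ℝ × ℝ).1,
        (MeasurableEquiv.prodAssoc q : ℝ × ℝ × ℝ).2.1)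
        * w (MeasurableEquiv.prodAssoc q : ℝ × ℝ × ℝ).2.2
      = S.indicator u q.1 * w q.2 := by
    intro q
    rfl
  simp_rw [this]
  rw [show (volume : Measure ((ℝ × ℝ) × ℝ))
      = ((volume : Measure (ℝ × ℝ)).prod (volume : Measure ℝ)) from rfl]
  rw [integral_prod_mul (f := S.indicator u) (g := w), integral_indicator hS]

lemma exp_int (α : ℝ) (hα : 0 < α) : ∫ z : ℝ, Real.exp (-α * |z|) ^ 2 = 1 / α := by
  have h1 : ∀ z : ℝ, Real.exp (-α * |z|) ^ 2 = Real.exp (-(2 * α * |z|)) := by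
    intro z
    rw [← Real.exp_nat_mul]
    ring_nf
  simp_rw [h1]
  have h2 : ∫ z : ℝ, Real.exp (-(2 * α * |z|))
      = 2 * ∫ z in Ioi (0:ℝ), Real.exp (-(2 * α * z)) := by
    exact integral_comp_abs (f := fun t => Real.exp (-(2 * α * t)))
  rw [h2]
  have h3 : ∫ z in Ioi (0:ℝ), Real.exp (-(2 * α * z))
      = (2 * α)⁻¹ • ∫ z in Ioi (2 * α * 0), Real.exp (-z) := by
    exact integral_comp_mul_left_Ioi (fun t => Real.exp (-t)) 0 (by linarith)
  rw [h3]
  rw [mul_zero, integral_exp_neg_Ioi, neg_zero, Real.exp_zero]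
  rw [smul_eq_mul]
  field_simp

end Aux

/-- For a normalized Neumann eigenfunction `φ_N` on a bounded section `S ⊂ ℝ²`
(expressed in weak form, which encodes both `-Δφ_N = λ_N φ_N` and `∂_n φ_N = 0` on `∂S`),
the field `E_α = (∂_y φ_N, -∂_x φ_N, 0) e^{-α|z|}` on `Ω = S × ℝ` satisfies
`∫ |curl E_α|² − λ_N ∫ |E_α|² = α λ_N`. -/
theorem stmt17 (S : Set (ℝ × ℝ)) (hSo : IsOpen S) (hSb : Bornology.IsBounded S)
    (φN : ℝ × ℝ → ℝ) (lamN : ℝ) (hlamN : 0 < lamN) (hφN : ContDiff ℝ (⊤ : ℕ∞) φN)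
    (heig : ∀ p ∈ S, lap2 φN p = -lamN * φN p)
    (hweak : ∀ g : ℝ × ℝ → ℝ, ContDiff ℝ (⊤ : ℕ∞) g →
      (∫ p in S, (pu φN p * pu g p + pv φN p * pv g p)) = lamN * ∫ p in S, φN p * g p)
    (hnorm : (∫ p in S, φN p ^ 2) = 1)
    (α : ℝ) (hα : 0 < α) :
    let Ω : Set (ℝ × ℝ × ℝ) := {x | (x.1, x.2.1) ∈ S}
    let E1 : ℝ × ℝ × ℝ → ℝ := fun x => pv φN (x.1, x.2.1) * Real.exp (-α * |x.2.2|)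
    let E2 : ℝ × ℝ × ℝ → ℝ := fun x => -(pu φN (x.1, x.2.1)) * Real.exp (-α * |x.2.2|)
    let E3 : ℝ × ℝ × ℝ → ℝ := fun _ => 0
    (∫ x in Ω, ((curlFst E1 E2 E3 x) ^ 2 + (curlSnd E1 E2 E3 x) ^ 2
          + (curlTrd E1 E2 E3 x) ^ 2))
      - lamN * (∫ x in Ω, (E1 x ^ 2 + E2 x ^ 2 + E3 x ^ 2)) = α * lamN := by
  intro Ω E1 E2 E3
  have hSm : MeasurableSet S := hSo.measurableSet
  have hΩm : MeasurableSet Ω :=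
    (measurable_fst.prodMk (measurable_fst.comp measurable_snd)) hSm
  -- smoothness of partial derivatives
  have hfd : ContDiff ℝ (⊤ : ℕ∞) fun p : ℝ × ℝ => fderiv ℝ φN p := hφN.fderiv_right (by simp)
  have hpu : ContDiff ℝ (⊤ : ℕ∞) (pu φN) := by
    unfold pu; exact hfd.clm_apply contDiff_const
  have hpv : ContDiff ℝ (⊤ : ℕ∞) (pv φN) := by
    unfold pv; exact hfd.clm_apply contDiff_const
  -- integrability of continuous functions on S
  have hK : IsCompact (closure S) := hSb.isCompact_closure
  have int_of_cont : ∀ f : ℝ × ℝ → ℝ, Continuous f → IntegrableOn f S := fun f hf =>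
    (hf.continuousOn.integrableOn_compact hK).mono_set subset_closure
  -- energy identity from weak formulation
  have h1 : (∫ p in S, ((pu φN p) ^ 2 + (pv φN p) ^ 2)) = lamN := by
    have hw := hweak φN hφN
    simp_rw [← pow_two] at hw
    rw [hw, hnorm, mul_one]
  -- the L² integral
  have hE : (∫ x in Ω, (E1 x ^ 2 + E2 x ^ 2 + E3 x ^ 2)) = lamN * (1 / α) := by
    have he : ∫ x in Ω, (E1 x ^ 2 + E2 x ^ 2 + E3 x ^ 2)
        = ∫ x in Ω, (fun p : ℝ × ℝ => (pu φN p) ^ 2 + (pv φN p) ^ 2) (x.1, x.2.1)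
            * (fun z : ℝ => Real.exp (-α * |z|) ^ 2) x.2.2 := by
      refine setIntegral_congr_fun hΩm (fun x _ => ?_)
      simp only [E1, E2, E3]
      ring
    rw [he]
    simp only [Ω]
    refine (int_prod S hSm (fun p => (pu φN p) ^ 2 + (pv φN p) ^ 2)
      (fun z => Real.exp (-α * |z|) ^ 2)).trans ?_
    beta_reduce
    rw [h1, exp_int α hα]
  -- the curl integral
  have hC : (∫ x in Ω, ((curlFst E1 E2 E3 x) ^ 2 + (curlSnd E1 E2 E3 x) ^ 2
        + (curlTrd E1 E2 E3 x) ^ 2))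
      = (α ^ 2 * lamN + lamN ^ 2) * (1 / α) := by
    have he : ∫ x in Ω, ((curlFst E1 E2 E3 x) ^ 2 + (curlSnd E1 E2 E3 x) ^ 2
          + (curlTrd E1 E2 E3 x) ^ 2)
        = ∫ x in Ω, (fun p : ℝ × ℝ =>
              α ^ 2 * ((pu φN p) ^ 2 + (pv φN p) ^ 2) + lamN ^ 2 * (φN p) ^ 2) (x.1, x.2.1)
            * (fun z : ℝ => Real.exp (-α * |z|) ^ 2) x.2.2 := by
      refine setIntegral_congr_ae hΩm ?_
      filter_upwards [ae_ne_zero] with x hz hx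
      have hp : (x.1, x.2.1) ∈ S := hx
      have hs : (SignType.sign x.2.2 : ℝ) * (SignType.sign x.2.2 : ℝ) = 1 := by
        rcases lt_or_gt_of_ne hz with h | h
        · rw [sign_neg h]; norm_num
        · rw [sign_pos h]; norm_num
      have hzE1 : pz E1 x = pv φN (x.1, x.2.1)
          * (Real.exp (-α * |x.2.2|) * (-α * (SignType.sign x.2.2 : ℝ))) :=
        pz_form α (pv φN) (hpv.differentiable (by simp)) x hz
      have hzE2 : pz E2 x = -(pu φN (x.1, x.2.1))
          * (Real.exp (-α * |x.2.2|) * (-α * (SignType.sign x.2.2 : ℝ))) :=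
        pz_form α (fun q => -(pu φN q)) ((hpu.differentiable (by simp)).neg) x hz
      have hxE2 : px E2 x = -(pu (pu φN) (x.1, x.2.1)) * Real.exp (-α * |x.2.2|) := by
        rw [px_form α (fun q => -(pu φN q)) ((hpu.differentiable (by simp)).neg) x hz,
          fderiv_fun_neg]
        simp only [ContinuousLinearMap.neg_apply]
        rfl
      have hyE1 : py E1 x = pv (pv φN) (x.1, x.2.1) * Real.exp (-α * |x.2.2|) :=
        py_form α (pv φN) (hpv.differentiable (by simp)) x hz
      have hE3x : px E3 x = 0 := by
        simp [px, E3, fderiv_const]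
      have hE3y : py E3 x = 0 := by
        simp [py, E3, fderiv_const]
      have hlap : pu (pu φN) (x.1, x.2.1) + pv (pv φN) (x.1, x.2.1)
          = -lamN * φN (x.1, x.2.1) := heig _ hp
      simp only [curlFst, curlSnd, curlTrd, hzE1, hzE2, hxE2, hyE1, hE3x, hE3y]
      linear_combination (α ^ 2 * Real.exp (-α * |x.2.2|) ^ 2
          * ((pu φN (x.1, x.2.1)) ^ 2 + (pv φN (x.1, x.2.1)) ^ 2)) * hs
        + (Real.exp (-α * |x.2.2|) ^ 2 * (pu (pu φN) (x.1, x.2.1)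
            + pv (pv φN) (x.1, x.2.1) - lamN * φN (x.1, x.2.1))) * hlap
    rw [he]
    simp only [Ω]
    refine (int_prod S hSm
      (fun p => α ^ 2 * ((pu φN p) ^ 2 + (pv φN p) ^ 2) + lamN ^ 2 * (φN p) ^ 2)
      (fun z => Real.exp (-α * |z|) ^ 2)).trans ?_
    beta_reduce
    rw [exp_int α hα]
    congr 1
    have i1 : IntegrableOn (fun p : ℝ × ℝ => α ^ 2 * ((pu φN p) ^ 2 + (pv φN p) ^ 2)) S :=
      int_of_cont _ (continuous_const.mul ((hpu.continuous.pow 2).add (hpv.continuous.pow 2)))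
    have i2 : IntegrableOn (fun p : ℝ × ℝ => lamN ^ 2 * (φN p) ^ 2) S :=
      int_of_cont _ (continuous_const.mul (hφN.continuous.pow 2))
    rw [integral_add i1 i2, integral_const_mul, integral_const_mul, h1, hnorm, mul_one]
  rw [hC, hE]
  field_simp
  ring
end
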